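/- arXiv:2405.06223 — 2 statements merged into one kernel-verified Lean document; each statement's English description precedes it below -/
import Mathlib

section
/- Let X and H be real Banach spaces and ι : X → H an injective, continuous, compact linear map. Fix T > 0, K > 0, R > 0, p ∈ [1, ∞) and ϖ ∈ (0, 1]. Let E be the set of u ∈ C([0, T], H) such that (i) ‖u(t)‖_H ≤ K for all t, (ii) ‖u(t) − u(s)‖_H ≤ K |t − s|^ϖ for all s, t ∈ [0, T], and (iii) there exists a measurable v : [0, T] → X with u(t) = ι(v(t)) for almost every t ∈ [0, T] and ∫_0^T ‖v(t)‖_X^p dt ≤ R^p. Then E is relatively compact (totally bounded) in C([0, T], H) equipped with the supremum metric. -/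
/-!
By Arzelà–Ascoli it suffices that the functions are equicontinuous, which is the uniform Hölder
bound, and that all their values together form a totally bounded subset of `H`. Fix a scale `δ`.
By Chebyshev's inequality the set where `‖v‖ ≥ Λ` has measure less than `δ` once `Λ` is large
(depending only on `R`, `p` and `δ`), so every interval of length `δ` in `[0, T]` contains a time
`s` with `u s = ι (v s)` and `‖v s‖ < Λ`. Hence every value `u t` lies within `K δ ^ ϖ` of the
set `ι '' ball 0 Λ`, which is relatively compact because `ι` is compact.
-/

open MeasureTheory Filter Set Metric
open scoped ENNReal Topology

theorem Metric.totallyBounded_of_forall_subset_thickening {α : Type*} [PseudoMetricSpace α]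
    {s : Set α} (h : ∀ ε > 0, ∃ t, TotallyBounded t ∧ s ⊆ thickening ε t) :
    TotallyBounded s := by
  refine totallyBounded_iff.2 fun ε hε => ?_
  obtain ⟨t, ht, hst⟩ := h (ε / 2) (half_pos hε)
  obtain ⟨F, hF, htF⟩ := totallyBounded_iff.1 ht (ε / 2) (half_pos hε)
  refine ⟨F, hF, fun x hx => ?_⟩
  obtain ⟨y, hy, hxy⟩ := mem_thickening_iff.1 (hst hx)
  obtain ⟨z, hz, hyz⟩ := mem_iUnion₂.1 (htF hy)
  refine mem_iUnion₂.2 ⟨z, hz, ?_⟩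
  calc dist x z ≤ dist x y + dist y z := dist_triangle _ _ _
    _ < ε / 2 + ε / 2 := add_lt_add hxy hyz
    _ = ε := add_halves ε

theorem ContinuousMap.totallyBounded_of_equicontinuous {α β : Type*} [TopologicalSpace α]
    [CompactSpace α] [MetricSpace β] [CompleteSpace β] {A : Set C(α, β)}
    (hA : Equicontinuous ((↑) : A → α → β)) (hval : TotallyBounded (⋃ f ∈ A, range f)) :
    TotallyBounded A := by
  set e := ContinuousMap.isometryEquivBoundedOfCompact α β
  have hmem : ∀ f : e '' A, e.symm f ∈ A := by
    rintro ⟨_, g, hg, rfl⟩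
    rwa [e.symm_apply_apply]
  have hcpt : IsCompact (closure (e '' A)) :=
    BoundedContinuousFunction.arzela_ascoli _
      (hval.closure.isCompact_of_isClosed isClosed_closure) (e '' A)
      (by rintro _ x ⟨f, hf, rfl⟩; exact subset_closure (mem_biUnion hf (mem_range_self x)))
      (hA.comp fun f : e '' A => ⟨e.symm f, hmem f⟩)
  simpa [image_image] using
    (hcpt.totallyBounded.subset subset_closure).image e.symm.isometry.uniformContinuous

theorem tendsto_const_mul_abs_rpow_nhds_zero (K : ℝ) {ϖ : ℝ} (hϖ : 0 < ϖ) :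
    Tendsto (fun d : ℝ => K * |d| ^ ϖ) (𝓝 0) (𝓝 0) := by
  have hcont : Continuous fun d : ℝ => K * |d| ^ ϖ :=
    continuous_const.mul (continuous_abs.rpow_const fun _ => Or.inr hϖ.le)
  simpa [Real.zero_rpow hϖ.ne'] using hcont.tendsto 0

theorem equicontinuous_of_dist_le_mul_rpow {ι α β : Type*} [PseudoMetricSpace α]
    [PseudoMetricSpace β] {F : ι → α → β} {K ϖ : ℝ} (hϖ : 0 < ϖ)
    (hF : ∀ x y i, dist (F i x) (F i y) ≤ K * dist x y ^ ϖ) : Equicontinuous F :=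
  equicontinuous_of_continuity_modulus _ (tendsto_const_mul_abs_rpow_nhds_zero K hϖ) F
    fun x y i => by simpa only [abs_dist] using hF x y i

theorem MeasureTheory.exists_mem_lt_of_setLIntegral_le {α : Type*} [MeasurableSpace α]
    {μ : Measure α} {S J : Set α} {f : α → ℝ≥0∞} {P : α → Prop} {M c : ℝ≥0∞}
    (hJ : MeasurableSet J) (hJS : J ⊆ S) (hP : ∀ᵐ x ∂μ.restrict S, P x)
    (hf : ∫⁻ x in S, f x ∂μ ≤ M) (hM : M < c * μ J) : ∃ x ∈ J, P x ∧ f x < c := by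
  by_contra! h
  have hcf : ∀ᵐ x ∂μ.restrict J, c ≤ f x := by
    filter_upwards [ae_restrict_of_ae_restrict_of_subset hJS hP, ae_restrict_mem hJ]
      with x hPx hx
    exact h x hx hPx
  refine hM.not_ge ?_
  calc c * μ J = ∫⁻ _ in J, c ∂μ := (setLIntegral_const J c).symm
    _ ≤ ∫⁻ x in J, f x ∂μ := lintegral_mono_ae hcf
    _ ≤ ∫⁻ x in S, f x ∂μ := lintegral_mono_set hJS
    _ ≤ M := hf

theorem ENNReal.exists_lt_ofReal_rpow_mul_ofReal {M : ℝ≥0∞} (hM : M ≠ ∞) {p δ : ℝ}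
    (hp : 0 < p) (hδ : 0 < δ) : ∃ Λ > 0, M < ENNReal.ofReal (Λ ^ p) * ENNReal.ofReal δ := by
  refine ⟨((M.toReal + 1) / δ) ^ p⁻¹, by positivity, ?_⟩
  have hΛ : (((M.toReal + 1) / δ) ^ p⁻¹) ^ p * δ = M.toReal + 1 := by
    rw [← Real.rpow_mul (by positivity), inv_mul_cancel₀ hp.ne', Real.rpow_one,
      div_mul_cancel₀ _ hδ.ne']
  rw [← ENNReal.ofReal_mul (by positivity), hΛ, ENNReal.lt_ofReal_iff_toReal_lt hM]
  exact lt_add_one _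

theorem exists_Icc_subset_Icc_mem {T δ t : ℝ} (hδ : 0 ≤ δ) (hδT : δ ≤ T) (ht : t ∈ Icc 0 T) :
    ∃ a, Icc a (a + δ) ⊆ Icc 0 T ∧ t ∈ Icc a (a + δ) := by
  refine ⟨min t (T - δ), Icc_subset_Icc (le_min ht.1 (by linarith)) ?_, min_le_left _ _, ?_⟩
  · linarith [min_le_right t (T - δ)]
  · rw [← min_add_add_right, sub_add_cancel]
    exact le_min (by linarith) ht.2

section HolderAeImage

variable {X H : Type*} [NormedAddCommGroup X] [NormedAddCommGroup H]
  {ι : X → H} {T K ϖ p : ℝ} {M : ℝ≥0∞}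

theorem exists_mem_ball_norm_sub_le_of_holder {δ Λ : ℝ} (hK : 0 ≤ K) (hϖ : 0 < ϖ) (hp : 0 < p)
    (hδ : 0 ≤ δ) (hδT : δ ≤ T) (hΛ : 0 < Λ)
    (hMΛ : M < ENNReal.ofReal (Λ ^ p) * ENNReal.ofReal δ) {u : C(Icc (0 : ℝ) T, H)}
    (hu : ∀ s t : Icc (0 : ℝ) T, ‖u t - u s‖ ≤ K * |(t : ℝ) - s| ^ ϖ) {v : ℝ → X}
    (huv : ∀ᵐ t ∂(volume.restrict (Icc (0 : ℝ) T)), ∀ h : t ∈ Icc (0 : ℝ) T, u ⟨t, h⟩ = ι (v t))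
    (hv : ∫⁻ t in Icc (0 : ℝ) T, ENNReal.ofReal (‖v t‖ ^ p) ≤ M) (t : Icc (0 : ℝ) T) :
    ∃ x ∈ ball (0 : X) Λ, ‖u t - ι x‖ ≤ K * δ ^ ϖ := by
  obtain ⟨a, haT, hta⟩ := exists_Icc_subset_Icc_mem hδ hδT t.2
  have hvol : volume (Icc a (a + δ)) = ENNReal.ofReal δ := by simp [Real.volume_Icc]
  obtain ⟨s, hsa, hus, hvs⟩ :=
    exists_mem_lt_of_setLIntegral_le measurableSet_Icc haT huv hv (by rwa [hvol])
  have hs : s ∈ Icc 0 T := haT hsa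
  refine ⟨v s, ?_, ?_⟩
  · rw [mem_ball_zero_iff]
    exact (Real.rpow_lt_rpow_iff (norm_nonneg _) hΛ.le hp).1
      (ENNReal.ofReal_lt_ofReal_iff'.1 hvs).1
  · have hts : |(t : ℝ) - s| ≤ δ :=
      abs_sub_le_iff.2 ⟨by linarith [hta.2, hsa.1], by linarith [hta.1, hsa.2]⟩
    rw [← hus hs]
    calc ‖u t - u ⟨s, hs⟩‖ ≤ K * |(t : ℝ) - s| ^ ϖ := hu _ _
      _ ≤ K * δ ^ ϖ := by gcongr

theorem totallyBounded_iUnion_range_of_holder (hι : ∀ r, TotallyBounded (ι '' ball (0 : X) r))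
    (hT : 0 < T) (hK : 0 ≤ K) (hϖ : 0 < ϖ) (hp : 0 < p) (hM : M ≠ ∞)
    {A : Set C(Icc (0 : ℝ) T, H)}
    (hA : ∀ u ∈ A, (∀ s t : Icc (0 : ℝ) T, ‖u t - u s‖ ≤ K * |(t : ℝ) - s| ^ ϖ) ∧
      ∃ v : ℝ → X,
        (∀ᵐ t ∂(volume.restrict (Icc (0 : ℝ) T)), ∀ h : t ∈ Icc (0 : ℝ) T, u ⟨t, h⟩ = ι (v t)) ∧
        ∫⁻ t in Icc (0 : ℝ) T, ENNReal.ofReal (‖v t‖ ^ p) ≤ M) :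
    TotallyBounded (⋃ u ∈ A, range u) := by
  refine totallyBounded_of_forall_subset_thickening fun ε hε => ?_
  obtain ⟨δ, hδε, hδ, hδT⟩ := ((((tendsto_const_mul_abs_rpow_nhds_zero K hϖ).eventually
    (gt_mem_nhds hε)).filter_mono nhdsWithin_le_nhds).and (Ioo_mem_nhdsGT hT)).exists
  rw [abs_of_pos hδ] at hδε
  obtain ⟨Λ, hΛ, hMΛ⟩ := ENNReal.exists_lt_ofReal_rpow_mul_ofReal hM hp hδ
  refine ⟨ι '' ball 0 Λ, hι Λ, iUnion₂_subset fun u hu => range_subset_iff.2 fun t => ?_⟩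
  obtain ⟨hhol, v, huv, hv⟩ := hA u hu
  obtain ⟨x, hx, hux⟩ := exists_mem_ball_norm_sub_le_of_holder hK hϖ hp hδ.le hδT.le hΛ hMΛ
    hhol huv hv t
  exact mem_thickening_iff.2 ⟨ι x, mem_image_of_mem _ hx, by rw [dist_eq_norm]; linarith⟩

end HolderAeImage

theorem aubin_lions_totallyBounded_general
    {X H : Type*} [NormedAddCommGroup X] [NormedSpace ℝ X]
    [MeasurableSpace X]
    [NormedAddCommGroup H] [NormedSpace ℝ H] [CompleteSpace H]
    (ι : X →L[ℝ] H)
    (hcomp : ∀ s : Set X, Bornology.IsBounded s → IsCompact (closure (⇑ι '' s)))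
    (T K R p ϖ : ℝ) (hT : 0 < T) (hK : 0 < K)
    (hp : 1 ≤ p) (hϖ0 : 0 < ϖ) :
    TotallyBounded { u : C(Set.Icc (0 : ℝ) T, H) |
      (∀ t : Set.Icc (0 : ℝ) T, ‖u t‖ ≤ K) ∧
      (∀ s t : Set.Icc (0 : ℝ) T, ‖u t - u s‖ ≤ K * |(t : ℝ) - (s : ℝ)| ^ ϖ) ∧
      (∃ v : ℝ → X, Measurable v ∧
        (∀ᵐ t ∂(volume.restrict (Set.Icc (0 : ℝ) T)),
          ∀ h : t ∈ Set.Icc (0 : ℝ) T, u ⟨t, h⟩ = ι (v t)) ∧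
        (∫⁻ t in Set.Icc (0 : ℝ) T, ENNReal.ofReal (‖v t‖ ^ p)) ≤
          ENNReal.ofReal (R ^ p)) } := by
  refine ContinuousMap.totallyBounded_of_equicontinuous ?_ ?_
  · refine equicontinuous_of_dist_le_mul_rpow (K := K) hϖ0 fun x y u => ?_
    rw [dist_eq_norm, Subtype.dist_eq, Real.dist_eq]
    exact u.2.2.1 y x
  · have hι : ∀ r, TotallyBounded (ι '' ball (0 : X) r) := fun r =>
      (hcomp _ isBounded_ball).totallyBounded.subset subset_closure
    refine totallyBounded_iUnion_range_of_holder hι hT hK.le hϖ0 (zero_lt_one.trans_le hp)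
      (ENNReal.ofReal_ne_top (r := R ^ p)) fun u hu => ?_
    obtain ⟨-, hhol, v, -, huv, hv⟩ := hu
    exact ⟨hhol, v, huv, hv⟩

/-- Aubin–Lions/Arzelà–Ascoli-type compactness: let `ι : X → H` be an injective, continuous,
compact linear map between Banach spaces. The set of `u ∈ C([0,T], H)` that are bounded by
`K`, `ϖ`-Hölder with constant `K`, and a.e. equal to `ι ∘ v` for some measurable
`v : [0,T] → X` with `∫_0^T ‖v‖_X^p ≤ R^p`, is totally bounded in `C([0,T], H)` with the
supremum metric. -/
theorem aubin_lions_totallyBounded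
    {X H : Type*} [NormedAddCommGroup X] [NormedSpace ℝ X] [CompleteSpace X]
    [MeasurableSpace X] [BorelSpace X]
    [NormedAddCommGroup H] [NormedSpace ℝ H] [CompleteSpace H]
    (ι : X →L[ℝ] H) (hinj : Function.Injective ι)
    (hcomp : ∀ s : Set X, Bornology.IsBounded s → IsCompact (closure (⇑ι '' s)))
    (T K R p ϖ : ℝ) (hT : 0 < T) (hK : 0 < K) (hR : 0 < R)
    (hp : 1 ≤ p) (hϖ0 : 0 < ϖ) (hϖ1 : ϖ ≤ 1) :
    TotallyBounded { u : C(Set.Icc (0 : ℝ) T, H) |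
      (∀ t : Set.Icc (0 : ℝ) T, ‖u t‖ ≤ K) ∧
      (∀ s t : Set.Icc (0 : ℝ) T, ‖u t - u s‖ ≤ K * |(t : ℝ) - (s : ℝ)| ^ ϖ) ∧
      (∃ v : ℝ → X, Measurable v ∧
        (∀ᵐ t ∂(volume.restrict (Set.Icc (0 : ℝ) T)),
          ∀ h : t ∈ Set.Icc (0 : ℝ) T, u ⟨t, h⟩ = ι (v t)) ∧
        (∫⁻ t in Set.Icc (0 : ℝ) T, ENNReal.ofReal (‖v t‖ ^ p)) ≤
          ENNReal.ofReal (R ^ p)) } :=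
  aubin_lions_totallyBounded_general ι hcomp T K R p ϖ hT hK hp hϖ0
end

section
/- Let X and H be real Banach spaces and ι : X → H an injective, continuous, compact linear map, let (Ω, F, P) be a probability space, and fix T > 0, p ∈ [1, ∞), ϖ ∈ (0, 1] and M > 0. Let u : Ω × [0, T] → H be a process with continuous sample paths, and suppose there exist: a random variable ℜ ≥ 0 with E ℜ² ≤ M such that almost surely ‖u(t)‖_H ≤ ℜ and ‖u(t) − u(s)‖_H ≤ ℜ |t − s|^ϖ for all s, t ∈ [0, T]; and a measurable process v : Ω × [0, T] → X with u(t) = ι(v(t)) for almost every t almost surely and E ∫_0^T ‖v(t)‖_X^p dt ≤ M. Then for every ε > 0 there exists a compact set 𝒰 ⊆ H such that P( u(t) ∈ 𝒰 for all t ∈ [0, T] ) ≥ 1 − ε. -/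
open MeasureTheory Filter Set Metric
open scoped ENNReal Topology

/-! On the event `{ℜ ≤ K} ∩ {∫₀ᵀ ‖v‖ᵖ ≤ S}`, which by Markov's inequality has probability at
least `1 - ε` for suitable `K, S`, every value `u t` is close to the image of a ball: for each
scale `δ ∈ (0, T]` some time `s` in a window of length `δ` containing `t` has `u s = ι (v s)` and
`‖v s‖ᵖ ≤ S / δ`, so `u t` lies within `K δ^ϖ` of `ι (closedBall 0 ((S / δ)^(1/p)))`, a relatively
compact set. As `K δ^ϖ → 0`, the intersection of these closed neighbourhoods over all scales is
totally bounded, hence compact. -/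

theorem isCompact_iInter_cthickening {α ι : Type*} [PseudoMetricSpace α] [CompleteSpace α]
    {K : ι → Set α} {r : ι → ℝ} (hK : ∀ i, IsCompact (K i)) (hr : ∀ ε > 0, ∃ i, r i < ε) :
    IsCompact (⋂ i, cthickening (r i) (K i)) := by
  refine TotallyBounded.isCompact_of_isClosed ?_ (isClosed_iInter fun _ => isClosed_cthickening)
  refine totallyBounded_iff.2 fun ε hε => ?_
  obtain ⟨i, hi⟩ := hr (ε / 4) (by positivity)
  obtain ⟨t, -, htfin, hKt⟩ :=
    finite_cover_balls_of_compact (hK i) (show 0 < ε / 4 by positivity)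
  refine ⟨t, htfin, ?_⟩
  rw [← thickening_eq_biUnion_ball] at hKt ⊢
  calc ⋂ i, cthickening (r i) (K i) ⊆ cthickening (ε / 4) (thickening (ε / 4) t) :=
        (iInter_subset _ i).trans <|
          (cthickening_mono hi.le _).trans (cthickening_subset_of_subset _ hKt)
    _ ⊆ cthickening (ε / 4 + ε / 4) t := cthickening_thickening_subset (by positivity) _ _
    _ ⊆ thickening ε t := cthickening_subset_thickening' hε (by linarith) _

theorem exists_nat_measure_lt_le {Ω : Type*} [MeasurableSpace Ω] {μ : Measure Ω}
    {g : Ω → ℝ≥0∞} (hg : AEMeasurable g μ) (hint : ∫⁻ ω, g ω ∂μ ≠ ∞) {η : ℝ≥0∞} (hη : η ≠ 0) :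
    ∃ n : ℕ, μ {ω | n < g ω} ≤ η := by
  obtain ⟨n, hn⟩ := ENNReal.exists_nat_gt (ENNReal.div_ne_top hint hη)
  have hn0 : (n : ℝ≥0∞) ≠ 0 := (hn.trans_le' zero_le).ne'
  refine ⟨n, ?_⟩
  calc μ {ω | n < g ω} ≤ μ {ω | n ≤ g ω} :=
        measure_mono fun _ hω => le_of_lt (α := ℝ≥0∞) hω
    _ ≤ (∫⁻ ω, g ω ∂μ) / n := meas_ge_le_lintegral_div hg hn0 (ENNReal.natCast_ne_top n)
    _ ≤ η := by
      rw [ENNReal.div_le_iff hn0 (ENNReal.natCast_ne_top n)]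
      exact mul_comm η n ▸ ((ENNReal.div_lt_iff (Or.inl hη) (Or.inr hint)).1 hn).le

theorem exists_mem_and_le_setLIntegral_div {α : Type*} [MeasurableSpace α] {μ : Measure α}
    {s : Set α} {f : α → ℝ≥0∞} {Q : α → Prop} (hs : MeasurableSet s) (hμs : μ s ≠ 0)
    (hμs' : μ s ≠ ∞) (hf : AEMeasurable f (μ.restrict s)) (hQ : ∀ᵐ x ∂μ.restrict s, Q x) :
    ∃ x ∈ s, Q x ∧ f x ≤ (∫⁻ x in s, f x ∂μ) / μ s := by
  have := isFiniteMeasure_restrict.2 hμs'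
  have hN : μ.restrict s {x | ¬ (x ∈ s ∧ Q x)} = 0 :=
    ae_iff.1 ((ae_restrict_mem hs).and hQ)
  obtain ⟨x, hx, hfx⟩ := exists_notMem_null_le_laverage
    (by rwa [Ne, Measure.restrict_eq_zero]) hf hN
  rw [laverage_eq, Measure.restrict_apply_univ] at hfx
  exact ⟨x, (not_not.1 hx).1, (not_not.1 hx).2, hfx⟩

theorem ofReal_one_sub_le_measure_of_ae_notMem {Ω : Type*} [MeasurableSpace Ω]
    {μ : Measure Ω} [IsProbabilityMeasure μ] {s A B : Set Ω} {a b : ℝ} (ha : 0 ≤ a) (hb : 0 ≤ b)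
    (hA : μ A ≤ ENNReal.ofReal a) (hB : μ B ≤ ENNReal.ofReal b)
    (h : ∀ᵐ ω ∂μ, ω ∉ A → ω ∉ B → ω ∈ s) : ENNReal.ofReal (1 - (a + b)) ≤ μ s := by
  have hsc : μ sᶜ ≤ ENNReal.ofReal (a + b) := calc
    μ sᶜ ≤ μ (A ∪ B) := measure_mono_ae <| h.mono fun ω hω hωs => by
      by_contra hAB
      exact hωs (hω (fun hA => hAB (Or.inl hA)) fun hB => hAB (Or.inr hB))
    _ ≤ ENNReal.ofReal (a + b) := by
      rw [ENNReal.ofReal_add ha hb]; exact (measure_union_le _ _).trans (add_le_add hA hB)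
  rw [ENNReal.ofReal_sub 1 (add_nonneg ha hb), ENNReal.ofReal_one, tsub_le_iff_right,
    ← measure_univ (μ := μ)]
  exact (measure_univ_le_add_compl s).trans (add_le_add le_rfl hsc)

theorem exists_Icc_add_subset_Icc_mem {T δ t : ℝ} (hδ : δ ∈ Ioc 0 T) (ht : t ∈ Icc 0 T) :
    ∃ a, Icc a (a + δ) ⊆ Icc 0 T ∧ t ∈ Icc a (a + δ) := by
  refine ⟨min t (T - δ), Icc_subset_Icc (le_min ht.1 (by linarith [hδ.2])) ?_,
    min_le_left _ _, ?_⟩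
  · linarith [min_le_right t (T - δ)]
  · rcases le_total t (T - δ) with h | h
    · rw [min_eq_left h]; linarith [hδ.1]
    · rw [min_eq_right h]; linarith [ht.2]

section ApproxImage

variable {X H : Type*} [SeminormedAddCommGroup X] [SeminormedAddCommGroup H]

def approxImageSet (ι : X → H) (T p ϖ K S : ℝ) : Set H :=
  ⋂ δ : Ioc (0 : ℝ) T,
    cthickening (K * (δ : ℝ) ^ ϖ) (closure (ι '' closedBall 0 ((S / δ) ^ p⁻¹)))

theorem isCompact_approxImageSet [CompleteSpace H] {ι : X → H}
    (hι : ∀ s : Set X, Bornology.IsBounded s → IsCompact (closure (ι '' s)))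
    {T p ϖ K S : ℝ} (hT : 0 < T) (hϖ : 0 < ϖ) : IsCompact (approxImageSet ι T p ϖ K S) := by
  refine isCompact_iInter_cthickening (fun δ => hι _ isBounded_closedBall) fun ε hε => ?_
  have hlim : Tendsto (fun δ : ℝ => K * δ ^ ϖ) (𝓝[>] 0) (𝓝 0) := by
    have := ((Real.continuousAt_rpow_const 0 ϖ (Or.inr hϖ.le)).tendsto.const_mul K)
    rw [Real.zero_rpow hϖ.ne', mul_zero] at this
    exact this.mono_left nhdsWithin_le_nhds
  obtain ⟨δ, hδε, hδ⟩ := ((hlim.eventually (gt_mem_nhds hε)).and (Ioc_mem_nhdsGT hT)).exists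
  exact ⟨⟨δ, hδ⟩, hδε⟩

theorem mem_approxImageSet [MeasurableSpace X] [OpensMeasurableSpace X] {ι : X → H}
    {T p ϖ K S : ℝ} (hp : 0 < p) (hϖ : 0 ≤ ϖ) (hK : 0 ≤ K) (hS : 0 ≤ S) {w : ℝ → H}
    {x : ℝ → X} (hxm : Measurable x)
    (hw : ∀ s ∈ Icc 0 T, ∀ t ∈ Icc 0 T, ‖w t - w s‖ ≤ K * |t - s| ^ ϖ)
    (hwx : ∀ᵐ t ∂volume.restrict (Icc 0 T), w t = ι (x t))
    (hx : ∫⁻ t in Icc 0 T, ENNReal.ofReal (‖x t‖ ^ p) ≤ ENNReal.ofReal S)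
    {t : ℝ} (ht : t ∈ Icc 0 T) : w t ∈ approxImageSet ι T p ϖ K S := by
  refine mem_iInter.2 fun ⟨δ, hδ⟩ => ?_
  obtain ⟨a, haT, hta⟩ := exists_Icc_add_subset_Icc_mem hδ ht
  have hvol : volume (Icc a (a + δ)) = ENNReal.ofReal δ := by simp [Real.volume_Icc]
  obtain ⟨s, hs, hws, hxs⟩ := exists_mem_and_le_setLIntegral_div measurableSet_Icc
    (by simp [hvol, hδ.1]) (by simp [hvol])
    ((continuous_norm.measurable.comp hxm).pow_const p).ennreal_ofReal.aemeasurable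
    (ae_restrict_of_ae_restrict_of_subset haT hwx)
  have hxs' : ‖x s‖ ^ p ≤ S / δ := by
    have := hxs.trans (ENNReal.div_le_div_right ((lintegral_mono_set haT).trans hx) _)
    rwa [hvol, ← ENNReal.ofReal_div_of_pos hδ.1,
      ENNReal.ofReal_le_ofReal_iff (div_nonneg hS hδ.1.le)] at this
  have hxC : x s ∈ closedBall 0 ((S / δ) ^ p⁻¹) := mem_closedBall_zero_iff.2 <|
    calc ‖x s‖ = (‖x s‖ ^ p) ^ p⁻¹ := (Real.rpow_rpow_inv (norm_nonneg _) hp.ne').symm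
      _ ≤ (S / δ) ^ p⁻¹ := by gcongr
  refine mem_cthickening_of_dist_le _ _ _ _ (subset_closure (mem_image_of_mem ι hxC)) ?_
  have hts : |t - s| ≤ δ :=
    abs_sub_le_iff.2 ⟨by linarith [hta.2, hs.1], by linarith [hta.1, hs.2]⟩
  rw [← hws, dist_eq_norm]
  calc ‖w t - w s‖ ≤ K * |t - s| ^ ϖ := hw s (haT hs) t ht
    _ ≤ K * δ ^ ϖ := by gcongr

end ApproxImage

theorem trajectories_stay_in_compact_set_general
    {X H Ω : Type*} [NormedAddCommGroup X] [NormedSpace ℝ X]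
    [MeasurableSpace X] [BorelSpace X]
    [NormedAddCommGroup H] [NormedSpace ℝ H] [CompleteSpace H]
    [MeasurableSpace Ω] (P : Measure Ω) [IsProbabilityMeasure P]
    (ι : X →L[ℝ] H)
    (hcomp : ∀ s : Set X, Bornology.IsBounded s → IsCompact (closure (⇑ι '' s)))
    (T p ϖ M : ℝ) (hT : 0 < T) (hp : 1 ≤ p) (hϖ0 : 0 < ϖ)
    (u : Ω → ℝ → H)
    (R : Ω → ℝ) (hRmeas : Measurable R)
    (hR2 : ∫⁻ ω, ENNReal.ofReal ((R ω) ^ 2) ∂P ≤ ENNReal.ofReal M)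
    (hholder : ∀ᵐ ω ∂P, ∀ s ∈ Set.Icc (0 : ℝ) T, ∀ t ∈ Set.Icc (0 : ℝ) T,
      ‖u ω t - u ω s‖ ≤ R ω * |t - s| ^ ϖ)
    (v : Ω → ℝ → X) (hvmeas : Measurable (Function.uncurry v))
    (huv : ∀ᵐ ω ∂P, ∀ᵐ t ∂(volume.restrict (Set.Icc (0 : ℝ) T)), u ω t = ι (v ω t))
    (hvint : ∫⁻ ω, (∫⁻ t in Set.Icc (0 : ℝ) T, ENNReal.ofReal (‖v ω t‖ ^ p)) ∂P ≤
      ENNReal.ofReal M) :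
    ∀ ε : ℝ, 0 < ε → ∃ 𝒰 : Set H, IsCompact 𝒰 ∧
      ENNReal.ofReal (1 - ε) ≤ P { ω | ∀ t ∈ Set.Icc (0 : ℝ) T, u ω t ∈ 𝒰 } := by
  intro ε hε
  have hε2 : ENNReal.ofReal (ε / 2) ≠ 0 := (ENNReal.ofReal_pos.2 (half_pos hε)).ne'
  obtain ⟨m, hm⟩ := exists_nat_measure_lt_le (hRmeas.pow_const 2).ennreal_ofReal.aemeasurable
    (ne_top_of_le_ne_top ENNReal.ofReal_ne_top hR2) hε2
  obtain ⟨n, hn⟩ := exists_nat_measure_lt_le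
    ((hvmeas.norm.pow_const p).ennreal_ofReal.lintegral_prod_right').aemeasurable
    (ne_top_of_le_ne_top ENNReal.ofReal_ne_top hvint) hε2
  refine ⟨approxImageSet ι T p ϖ √m n, isCompact_approxImageSet hcomp hT hϖ0, ?_⟩
  rw [← add_halves ε]
  refine ofReal_one_sub_le_measure_of_ae_notMem (half_pos hε).le (half_pos hε).le hm hn ?_
  filter_upwards [hholder, huv] with ω hω hωv hRω hvω t ht
  simp only [not_lt, ← ENNReal.ofReal_natCast] at hRω hvω
  have hRm : R ω ≤ √m := (le_abs_self _).trans <| Real.abs_le_sqrt <|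
    (ENNReal.ofReal_le_ofReal_iff m.cast_nonneg).1 hRω
  refine mem_approxImageSet (by linarith) hϖ0.le (Real.sqrt_nonneg _) n.cast_nonneg
    hvmeas.of_uncurry_left (fun s hs t ht => (hω s hs t ht).trans ?_) hωv hvω ht
  gcongr

/-- Tightness of trajectories: let `ι : X → H` be an injective, continuous, compact linear
map between Banach spaces and `u` a continuous-path `H`-valued process on `[0,T]` which is
a.s. bounded and `ϖ`-Hölder with a constant `ℜ` satisfying `E ℜ² ≤ M`, and a.e. equal to
`ι ∘ v` for a jointly measurable `X`-valued process `v` with `E ∫_0^T ‖v‖_X^p ≤ M`.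
Then for every `ε > 0` there is a compact `𝒰 ⊆ H` such that with probability at least
`1 − ε` the whole trajectory stays in `𝒰`. -/
theorem trajectories_stay_in_compact_set
    {X H Ω : Type*} [NormedAddCommGroup X] [NormedSpace ℝ X] [CompleteSpace X]
    [MeasurableSpace X] [BorelSpace X]
    [NormedAddCommGroup H] [NormedSpace ℝ H] [CompleteSpace H]
    [MeasurableSpace Ω] (P : Measure Ω) [IsProbabilityMeasure P]
    (ι : X →L[ℝ] H) (hinj : Function.Injective ι)
    (hcomp : ∀ s : Set X, Bornology.IsBounded s → IsCompact (closure (⇑ι '' s)))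
    (T p ϖ M : ℝ) (hT : 0 < T) (hp : 1 ≤ p) (hϖ0 : 0 < ϖ) (hϖ1 : ϖ ≤ 1) (hM : 0 < M)
    (u : Ω → ℝ → H) (hucont : ∀ ω, ContinuousOn (u ω) (Set.Icc 0 T))
    (R : Ω → ℝ) (hRmeas : Measurable R) (hR0 : ∀ ω, 0 ≤ R ω)
    (hR2 : ∫⁻ ω, ENNReal.ofReal ((R ω) ^ 2) ∂P ≤ ENNReal.ofReal M)
    (hbound : ∀ᵐ ω ∂P, ∀ t ∈ Set.Icc (0 : ℝ) T, ‖u ω t‖ ≤ R ω)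
    (hholder : ∀ᵐ ω ∂P, ∀ s ∈ Set.Icc (0 : ℝ) T, ∀ t ∈ Set.Icc (0 : ℝ) T,
      ‖u ω t - u ω s‖ ≤ R ω * |t - s| ^ ϖ)
    (v : Ω → ℝ → X) (hvmeas : Measurable (Function.uncurry v))
    (huv : ∀ᵐ ω ∂P, ∀ᵐ t ∂(volume.restrict (Set.Icc (0 : ℝ) T)), u ω t = ι (v ω t))
    (hvint : ∫⁻ ω, (∫⁻ t in Set.Icc (0 : ℝ) T, ENNReal.ofReal (‖v ω t‖ ^ p)) ∂P ≤
      ENNReal.ofReal M) :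
    ∀ ε : ℝ, 0 < ε → ∃ 𝒰 : Set H, IsCompact 𝒰 ∧
      ENNReal.ofReal (1 - ε) ≤ P { ω | ∀ t ∈ Set.Icc (0 : ℝ) T, u ω t ∈ 𝒰 } :=
  trajectories_stay_in_compact_set_general P ι hcomp T p ϖ M hT hp hϖ0 u R hRmeas hR2 hholder v
    hvmeas huv hvint
end
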